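/- For each level ℓ ∈ ℕ and special simple root α_i, the affine map A_i(λ) = ℓλ_i∨ + w_i λ maps the level ℓ alcove A_ℓ = {λ ∈ P : ⟨λ,α_j⟩ ≥ 0 for all simple roots α_j, ⟨λ,θ⟩ ≤ ℓ} into itself, and the assignment z ↦ A_i defines a group action of the center Z(G) ≅ P∨/Q∨ on A_ℓ. -/

import Mathlib

open scoped RealInnerProductSpace

variable {V : Type*} [NormedAddCommGroup V] [InnerProductSpace ℝ V]

/-- The Weyl group: the subgroup of linear isometries generated by the
reflections in the roots. -/
def weylGroup (R : Finset V) : Subgroup (V ≃ₗᵢ[ℝ] V) :=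
  Subgroup.closure {w | ∃ α ∈ R, ∀ v, w v = v - (2 * ⟪v, α⟫ / ⟪α, α⟫) • α}

/-- The level ℓ alcove: weights λ (integral pairing with all coroots) which are
dominant and satisfy `⟨λ,θ⟩ ≤ ℓ`. -/
def alcove (R : Finset V) {n : ℕ} (Δ : Fin n → V) (θ : V) (ℓ : ℕ) : Set V :=
  {lam | (∀ α ∈ R, ∃ z : ℤ, ⟪lam, (2 / ⟪α, α⟫) • α⟫ = (z : ℝ)) ∧
    (∀ j, 0 ≤ ⟪lam, Δ j⟫) ∧ ⟪lam, θ⟫ ≤ (ℓ : ℝ)}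

/-- Reflection in a root, as a linear map. -/
noncomputable def reflMap (β : V) : V →ₗ[ℝ] V where
  toFun v := v - (2 * ⟪v, β⟫ / ⟪β, β⟫) • β
  map_add' x y := by
    simp only [inner_add_left]
    rw [show 2 * (⟪x, β⟫ + ⟪y, β⟫) / ⟪β, β⟫
        = 2 * ⟪x, β⟫ / ⟪β, β⟫ + 2 * ⟪y, β⟫ / ⟪β, β⟫ by ring, add_smul]
    abel
  map_smul' c x := by
    simp only [real_inner_smul_left, RingHom.id_apply, smul_sub, smul_smul]
    rw [show 2 * (c * ⟪x, β⟫) / ⟪β, β⟫ = c * (2 * ⟪x, β⟫ / ⟪β, β⟫) by ring]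

theorem reflMap_invol (β : V) (hβ : ⟪β, β⟫ ≠ 0) (v : V) :
    reflMap β (reflMap β v) = v := by
  simp only [reflMap, LinearMap.coe_mk, AddHom.coe_mk]
  rw [inner_sub_left, real_inner_smul_left]
  have h : 2 * (⟪v, β⟫ - 2 * ⟪v, β⟫ / ⟪β, β⟫ * ⟪β, β⟫) / ⟪β, β⟫
      = -(2 * ⟪v, β⟫ / ⟪β, β⟫) := by field_simp; ring
  rw [h, neg_smul, sub_neg_eq_add, sub_add_cancel]

theorem reflMap_inner (β : V) (hβ : ⟪β, β⟫ ≠ 0) (v : V) :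
    ⟪reflMap β v, reflMap β v⟫ = ⟪v, v⟫ := by
  simp only [reflMap, LinearMap.coe_mk, AddHom.coe_mk]
  rw [inner_sub_left, inner_sub_right, inner_sub_right, real_inner_smul_left,
    real_inner_smul_left, real_inner_smul_right, real_inner_smul_right,
    real_inner_comm β v]
  field_simp
  ring

/-- Reflection in a root, as a linear isometry equivalence. -/
noncomputable def reflIso (β : V) (hβ : ⟪β, β⟫ ≠ 0) : V ≃ₗᵢ[ℝ] V where
  toLinearEquiv := LinearEquiv.ofLinear (reflMap β) (reflMap β)
    (by ext v; exact reflMap_invol β hβ v) (by ext v; exact reflMap_invol β hβ v)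
  norm_map' v := by
    have h := reflMap_inner β hβ v
    rw [real_inner_self_eq_norm_mul_norm, real_inner_self_eq_norm_mul_norm] at h
    calc ‖(reflMap β) v‖ = Real.sqrt (‖(reflMap β) v‖ * ‖(reflMap β) v‖) :=
          (Real.sqrt_mul_self (norm_nonneg _)).symm
      _ = Real.sqrt (‖v‖ * ‖v‖) := by rw [h]
      _ = ‖v‖ := Real.sqrt_mul_self (norm_nonneg _)

theorem reflIso_apply (β : V) (hβ : ⟪β, β⟫ ≠ 0) (v : V) :
    reflIso β hβ v = v - (2 * ⟪v, β⟫ / ⟪β, β⟫) • β := rfl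

/-- For each level ℓ and special simple root `α_i`, the affine map
`A_i(λ) = ℓ λ_i∨ + w_i λ` maps the level ℓ alcove into itself, and the assignment
`z ↦ A_i` defines a group action of the center `Z(G) ≅ P∨/Q∨` on the alcove:
`A_i ∘ A_j = id` when `w_i w_j = 1` and `A_i ∘ A_j = A_k` when `w_i w_j = w_k`. -/
theorem center_action_on_alcove
    (R : Finset V)
    (h0 : (0 : V) ∉ R)
    (hspan : Submodule.span ℝ (R : Set V) = ⊤)
    (hneg : ∀ α ∈ R, -α ∈ R)
    (hint : ∀ α ∈ R, ∀ β ∈ R, ∃ z : ℤ, 2 * ⟪α, β⟫ / ⟪α, α⟫ = (z : ℝ))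
    (hrefl : ∀ α ∈ R, ∀ β ∈ R, β - (2 * ⟪β, α⟫ / ⟪α, α⟫) • α ∈ R)
    (hirr : ∀ R₁ R₂ : Set V, (R : Set V) = R₁ ∪ R₂ →
      (∀ α ∈ R₁, ∀ β ∈ R₂, ⟪α, β⟫ = 0) → R₁ = ∅ ∨ R₂ = ∅)
    (θ : V) (hθR : θ ∈ R) (hθ2 : ⟪θ, θ⟫ = 2)
    (hlong : ∀ α ∈ R, ⟪α, α⟫ ≤ ⟪θ, θ⟫)
    {n : ℕ} (Δ : Fin n → V)
    (hΔR : ∀ i, Δ i ∈ R)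
    (hΔind : LinearIndependent ℝ Δ)
    (hbase : ∀ α ∈ R, α ∈ AddSubmonoid.closure (Set.range Δ) ∨
      -α ∈ AddSubmonoid.closure (Set.range Δ))
    (m : Fin n → ℕ) (hm : ∀ i, 1 ≤ m i)
    (hθsum : θ = ∑ i, (m i : ℝ) • Δ i)
    (ϖ : Fin n → V)
    (hϖ : ∀ i j, ⟪ϖ i, Δ j⟫ = if i = j then 1 else 0)
    (ℓ : ℕ) (w : Fin n → (V ≃ₗᵢ[ℝ] V))
    (hwW : ∀ i, m i = 1 → w i ∈ weylGroup R)
    (hwstab : ∀ i, m i = 1 →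
      (fun v => w i v) '' (insert (-θ) (Set.range Δ)) = insert (-θ) (Set.range Δ))
    (hwθ : ∀ i, m i = 1 → w i (-θ) = Δ i) :
    (∀ i, m i = 1 → ∀ lam ∈ alcove R Δ θ ℓ,
      (ℓ : ℝ) • ϖ i + w i lam ∈ alcove R Δ θ ℓ) ∧
    (∀ i j, m i = 1 → m j = 1 →
      (w i * w j = 1 → ∀ lam ∈ alcove R Δ θ ℓ,
        (ℓ : ℝ) • ϖ i + w i ((ℓ : ℝ) • ϖ j + w j lam) = lam) ∧
      (∀ k, m k = 1 → w i * w j = w k → ∀ lam ∈ alcove R Δ θ ℓ,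
        (ℓ : ℝ) • ϖ i + w i ((ℓ : ℝ) • ϖ j + w j lam) =
          (ℓ : ℝ) • ϖ k + w k lam)) := by
  classical
  -- basic facts
  have hix : ∀ α, α ∈ R → ⟪α, α⟫ ≠ 0 := by
    intro α hα
    rw [inner_self_ne_zero]
    rintro rfl; exact h0 hα
  have hposp : ∀ α, α ∈ R → 0 < ⟪α, α⟫ := fun α hα =>
    lt_of_le_of_ne real_inner_self_nonneg (Ne.symm (hix α hα))
  have winner : ∀ (g : V ≃ₗᵢ[ℝ] V) (x y : V), ⟪g x, y⟫ = ⟪x, g.symm y⟫ := by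
    intro g x y
    have h := g.inner_map_map x (g.symm y)
    rwa [g.apply_symm_apply] at h
  have hwmulapply : ∀ (a b : V ≃ₗᵢ[ℝ] V) (v : V), (a * b) v = a (b v) := fun a b v => rfl
  -- the Weyl group preserves R
  have hpres : ∀ g ∈ weylGroup R, ∀ β, β ∈ R → g β ∈ R ∧ g⁻¹ β ∈ R := by
    intro g hg
    have hg' : g ∈ Subgroup.closure
        {w : V ≃ₗᵢ[ℝ] V | ∃ α ∈ R, ∀ v, w v = v - (2 * ⟪v, α⟫ / ⟪α, α⟫) • α} := hg
    refine Subgroup.closure_induction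
      (p := fun g _ => ∀ β, β ∈ R → g β ∈ R ∧ g⁻¹ β ∈ R) ?_ ?_ ?_ ?_ hg'
    · rintro x ⟨α, hαR, hx⟩ β hβ
      have hαα := hix α hαR
      have hinv : ∀ v, x (x v) = v := by
        intro v
        rw [hx v, hx, inner_sub_left, real_inner_smul_left]
        have h : 2 * (⟪v, α⟫ - 2 * ⟪v, α⟫ / ⟪α, α⟫ * ⟪α, α⟫) / ⟪α, α⟫
            = -(2 * ⟪v, α⟫ / ⟪α, α⟫) := by field_simp; ring
        rw [h, neg_smul, sub_neg_eq_add, sub_add_cancel]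
      constructor
      · rw [hx β]; exact hrefl α hαR β hβ
      · have hxe : x⁻¹ β = x β := by
          have h1 : x⁻¹ (x (x β)) = x β := by
            rw [show (⇑x⁻¹ : V → V) = ⇑x.symm from rfl]
            exact x.symm_apply_apply (x β)
          rwa [hinv β] at h1
        rw [hxe, hx β]; exact hrefl α hαR β hβ
    · intro β hβ
      refine ⟨?_, ?_⟩ <;> simpa using hβ
    · intro x y hx hy px py β hβ
      constructor
      · have h1 : (x * y) β = x (y β) := rfl
        rw [h1]; exact (px _ ((py β hβ).1)).1
      · have h1 : (x * y)⁻¹ β = y⁻¹ (x⁻¹ β) := by rw [mul_inv_rev]; rfl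
        rw [h1]; exact (py _ ((px β hβ).2)).2
    · intro x hx px β hβ
      exact ⟨(px β hβ).2, by rw [inv_inv]; exact (px β hβ).1⟩
  have hreflW : ∀ (β : V) (hβ : ⟪β, β⟫ ≠ 0), β ∈ R → reflIso β hβ ∈ weylGroup R := by
    intro β hβ hβR
    exact Subgroup.subset_closure ⟨β, hβR, fun v => rfl⟩
  -- every root has a Weyl image not orthogonal to θ
  have horb : ∀ α, α ∈ R → ∃ g ∈ weylGroup R, ⟪θ, g α⟫ ≠ 0 := by
    intro α hα
    by_contra hcon
    push_neg at hcon
    set O : Set V := {v | ∃ g ∈ weylGroup R, (g : V ≃ₗᵢ[ℝ] V) α = v} with hO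
    have hαO : α ∈ O := ⟨1, one_mem _, by simp⟩
    set S₁ : Set V := {β | β ∈ (R : Set V) ∧ β ∈ Submodule.span ℝ O} with hS₁
    set S₂ : Set V := {β | β ∈ (R : Set V) ∧ ∀ γ ∈ O, ⟪β, γ⟫ = 0} with hS₂
    have hcover : (R : Set V) = S₁ ∪ S₂ := by
      ext β
      constructor
      · intro hβ
        by_cases hc : ∀ γ ∈ O, ⟪β, γ⟫ = 0
        · exact Or.inr ⟨hβ, hc⟩
        · push_neg at hc
          obtain ⟨γ, hγO, hne⟩ := hc
          left
          refine ⟨hβ, ?_⟩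
          have hββ : ⟪β, β⟫ ≠ 0 := hix β hβ
          have hsγO : reflIso β hββ γ ∈ O := by
            obtain ⟨g, hg, rfl⟩ := hγO
            exact ⟨reflIso β hββ * g, mul_mem (hreflW β hββ hβ) hg, rfl⟩
          have hc2 : (2 * ⟪γ, β⟫ / ⟪β, β⟫) ≠ 0 := by
            have hγβ : ⟪γ, β⟫ ≠ 0 := by rwa [real_inner_comm]
            exact div_ne_zero (mul_ne_zero two_ne_zero hγβ) hββ
          have hdiff : (2 * ⟪γ, β⟫ / ⟪β, β⟫) • β = γ - reflIso β hββ γ := by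
            rw [reflIso_apply, sub_sub_cancel]
          have hmem : (2 * ⟪γ, β⟫ / ⟪β, β⟫) • β ∈ Submodule.span ℝ O := by
            rw [hdiff]
            exact sub_mem (Submodule.subset_span hγO) (Submodule.subset_span hsγO)
          have h2 := Submodule.smul_mem (Submodule.span ℝ O) (2 * ⟪γ, β⟫ / ⟪β, β⟫)⁻¹ hmem
          rwa [smul_smul, inv_mul_cancel₀ hc2, one_smul] at h2
      · rintro (⟨hβ, _⟩ | ⟨hβ, _⟩) <;> exact hβ
    have horthS : ∀ β₁ ∈ S₁, ∀ β₂ ∈ S₂, ⟪β₁, β₂⟫ = 0 := by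
      rintro β₁ ⟨hβ₁R, hβ₁U⟩ β₂ ⟨hβ₂R, hβ₂⟩
      refine Submodule.span_induction (p := fun v _ => ⟪v, β₂⟫ = 0) ?_ ?_ ?_ ?_ hβ₁U
      · intro γ hγ; rw [real_inner_comm]; exact hβ₂ γ hγ
      · exact inner_zero_left _
      · intro a b _ _ ha hb; rw [inner_add_left, ha, hb, add_zero]
      · intro r a _ ha; rw [real_inner_smul_left, ha, mul_zero]
    rcases hirr S₁ S₂ hcover horthS with h1 | h2
    · have : α ∈ S₁ := ⟨hα, Submodule.subset_span hαO⟩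
      rw [h1] at this; exact this
    · have : θ ∈ S₂ := ⟨hθR, by rintro γ ⟨g, hg, rfl⟩; exact hcon g hg⟩
      rw [h2] at this; exact this
  -- the squared-length ratio with θ is an integer
  have hq : ∀ α, α ∈ R → ∃ z : ℤ, 2 / ⟪α, α⟫ = (z : ℝ) := by
    intro α hα
    obtain ⟨g, hgW, hgθ⟩ := horb α hα
    set β := (g : V ≃ₗᵢ[ℝ] V) α with hβdef
    have hβR : β ∈ R := (hpres g hgW α hα).1
    have hββ : ⟪β, β⟫ = ⟪α, α⟫ := g.inner_map_map α α
    obtain ⟨a, ha⟩ := hint β hβR θ hθR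
    obtain ⟨b, hb⟩ := hint θ hθR β hβR
    rw [hθ2] at hb
    have hbval : ⟪θ, β⟫ = (b : ℝ) := by
      field_simp at hb; linarith
    have hbne : (b : ℝ) ≠ 0 := by rw [← hbval]; exact hgθ
    have hαpos := hposp α hα
    have haR : (a : ℝ) = (2 / ⟪α, α⟫) * b := by
      rw [← ha, hββ, real_inner_comm θ β, hbval]; ring
    have hq1 : 1 ≤ 2 / ⟪α, α⟫ := by
      rw [le_div_iff₀ hαpos]
      have := hlong α hα; rw [hθ2] at this; linarith
    have hCS := real_inner_mul_inner_self_le θ β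
    rw [hθ2, hββ, hbval] at hCS
    have habR : (a : ℝ) * b ≤ 4 := by
      rw [haR]
      have h2 : (2 / ⟪α, α⟫) * ((b : ℝ) * b) ≤ (2 / ⟪α, α⟫) * (2 * ⟪α, α⟫) :=
        mul_le_mul_of_nonneg_left hCS (by positivity)
      calc (2 / ⟪α, α⟫) * (b : ℝ) * b = (2 / ⟪α, α⟫) * ((b : ℝ) * b) := by ring
        _ ≤ (2 / ⟪α, α⟫) * (2 * ⟪α, α⟫) := h2
        _ = 4 := by field_simp; ring
    have hbbR : (b : ℝ) * b ≤ (a : ℝ) * b := by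
      have h1 : (a : ℝ) * b = (2 / ⟪α, α⟫) * ((b : ℝ) * b) := by rw [haR]; ring
      nlinarith [mul_nonneg (by linarith : (0 : ℝ) ≤ 2 / ⟪α, α⟫ - 1)
        (mul_self_nonneg (b : ℝ))]
    have habZ : a * b ≤ 4 := by exact_mod_cast habR
    have hbbZ : b * b ≤ a * b := by exact_mod_cast hbbR
    have hbne' : b ≠ 0 := by exact_mod_cast hbne
    have hb4 : b * b ≤ 4 := le_trans hbbZ habZ
    have hbl : -2 ≤ b := by nlinarith
    have hbu : b ≤ 2 := by nlinarith
    interval_cases b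
    · -- b = -2
      push_cast at haR
      have ha1 : (a : ℝ) ≤ -2 := by linarith
      have ha1' : a ≤ -2 := by exact_mod_cast ha1
      have ha2 : -2 ≤ a := by linarith [habZ]
      have haa : a = -2 := le_antisymm ha1' ha2
      subst haa
      push_cast at haR
      exact ⟨1, by push_cast; linarith⟩
    · -- b = -1
      refine ⟨-a, ?_⟩
      push_cast at haR ⊢
      linarith
    · exact absurd rfl hbne'
    · -- b = 1
      refine ⟨a, ?_⟩
      push_cast at haR ⊢
      linarith
    · -- b = 2
      push_cast at haR
      have ha1 : (2 : ℝ) ≤ (a : ℝ) := by linarith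
      have ha1' : (2 : ℤ) ≤ a := by exact_mod_cast ha1
      have ha2 : a ≤ 2 := by linarith [habZ]
      have haa : a = 2 := le_antisymm ha2 ha1'
      subst haa
      push_cast at haR
      exact ⟨1, by push_cast; linarith⟩
  -- pairings of fundamental coweights with roots are integers
  have hcoef : ∀ (i : Fin n) (α), α ∈ R → ∃ z : ℤ, ⟪ϖ i, α⟫ = (z : ℝ) := by
    intro i α hα
    have hS : ∀ v ∈ AddSubmonoid.closure (Set.range Δ), ∃ z : ℤ, ⟪ϖ i, v⟫ = (z : ℝ) := by
      intro v hv
      refine AddSubmonoid.closure_induction (motive := fun v _ => ∃ z : ℤ, ⟪ϖ i, v⟫ = (z : ℝ))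
        ?_ ?_ ?_ hv
      · rintro x ⟨k, rfl⟩
        by_cases h : i = k
        · exact ⟨1, by rw [hϖ, if_pos h]; norm_num⟩
        · exact ⟨0, by rw [hϖ, if_neg h]; norm_num⟩
      · exact ⟨0, by simp⟩
      · rintro x y _ _ ⟨z1, h1⟩ ⟨z2, h2⟩
        exact ⟨z1 + z2, by rw [inner_add_right, h1, h2]; push_cast; ring⟩
    rcases hbase α hα with h | h
    · exact hS α h
    · obtain ⟨z, hz⟩ := hS _ h
      rw [inner_neg_right] at hz
      exact ⟨-z, by push_cast; linarith⟩
  -- -θ is not a simple root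
  have hnotθ : -θ ∉ Set.range Δ := by
    rintro ⟨k, hk⟩
    have hsum : ∑ j, (((m j : ℝ) + if j = k then 1 else 0) • Δ j) = 0 := by
      have h1 : ∑ j, ((if j = k then (1 : ℝ) else 0) • Δ j) = Δ k := by
        simp [ite_smul]
      simp only [add_smul, Finset.sum_add_distrib]
      rw [h1, ← hθsum, hk, add_neg_cancel]
    have h2 := (Fintype.linearIndependent_iff.mp hΔind) _ hsum k
    rw [if_pos rfl] at h2
    have h3 : (0 : ℝ) ≤ (m k : ℝ) := Nat.cast_nonneg _
    linarith
  have hΔinj : Function.Injective Δ := hΔind.injective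
  -- the simple roots span
  have hspanΔ : Submodule.span ℝ (Set.range Δ) = ⊤ := by
    have hsub : ∀ v ∈ AddSubmonoid.closure (Set.range Δ),
        v ∈ Submodule.span ℝ (Set.range Δ) := by
      intro v hv
      refine AddSubmonoid.closure_induction
        (motive := fun v _ => v ∈ Submodule.span ℝ (Set.range Δ)) ?_ ?_ ?_ hv
      · intro x hx; exact Submodule.subset_span hx
      · exact zero_mem _
      · intro x y _ _ hx hy; exact add_mem hx hy
    rw [eq_top_iff, ← hspan, Submodule.span_le]
    intro α hα
    rcases hbase α hα with h | h
    · exact hsub α h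
    · have h2 := (Submodule.span ℝ (Set.range Δ)).neg_mem (hsub _ h)
      simpa using h2
  -- equality test against the simple roots
  have eqΔ : ∀ x y : V, (∀ k, ⟪x, Δ k⟫ = ⟪y, Δ k⟫) → x = y := by
    intro x y h
    have hz : ∀ v ∈ Submodule.span ℝ (Set.range Δ), ⟪x - y, v⟫ = 0 := by
      intro v hv
      refine Submodule.span_induction (p := fun v _ => ⟪x - y, v⟫ = 0) ?_ ?_ ?_ ?_ hv
      · rintro v ⟨k, rfl⟩
        rw [inner_sub_left, h k, sub_self]
      · exact inner_zero_right _
      · intro a b _ _ ha hb; rw [inner_add_right, ha, hb, add_zero]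
      · intro r a _ ha; rw [real_inner_smul_right, ha, mul_zero]
    have h2 : ⟪x - y, x - y⟫ = 0 := hz _ (hspanΔ ▸ Submodule.mem_top)
    exact sub_eq_zero.mp (inner_self_eq_zero.mp h2)
  have hϖθ : ∀ i : Fin n, ⟪ϖ i, θ⟫ = (m i : ℝ) := by
    intro i
    rw [hθsum, inner_sum]
    simp only [real_inner_smul_right, hϖ, mul_ite, mul_one, mul_zero]
    rw [Finset.sum_ite_eq]
    simp
  -- the stabilized set
  have hFfwd : ∀ i, m i = 1 → ∀ x, x ∈ insert (-θ) (Set.range Δ) →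
      w i x ∈ insert (-θ) (Set.range Δ) := by
    intro i hi x hx
    rw [← hwstab i hi]
    exact ⟨x, hx, rfl⟩
  have hFbwd : ∀ i, m i = 1 → ∀ x, x ∈ insert (-θ) (Set.range Δ) →
      (w i).symm x ∈ insert (-θ) (Set.range Δ) := by
    intro i hi x hx
    rw [← hwstab i hi] at hx
    obtain ⟨y, hy, hyx⟩ := hx
    have h1 : (w i).symm x = y := by
      rw [← hyx]; exact (w i).symm_apply_apply y
    rwa [h1]
  have hWi : ∀ i, m i = 1 → ∀ α, α ∈ R → (w i).symm α ∈ R := by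
    intro i hi α hα
    have h1 := (hpres (w i) (hwW i hi) α hα).2
    rwa [show ((w i)⁻¹ : V ≃ₗᵢ[ℝ] V) α = (w i).symm α from rfl] at h1
  -- PART 1
  have part1 : ∀ i, m i = 1 → ∀ lam ∈ alcove R Δ θ ℓ,
      (ℓ : ℝ) • ϖ i + w i lam ∈ alcove R Δ θ ℓ := by
    intro i hi lam hlam
    obtain ⟨hint', hdom, hlev⟩ := hlam
    refine ⟨?_, ?_, ?_⟩
    · -- integrality
      intro α hα
      have hβR : (w i).symm α ∈ R := hWi i hi α hα
      set β := (w i).symm α with hβdef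
      have hββ : ⟪β, β⟫ = ⟪α, α⟫ := by
        have h1 := (w i).inner_map_map β β
        rw [show (w i) β = α from (w i).apply_symm_apply α] at h1
        exact h1.symm
      obtain ⟨z2, hz2⟩ := hint' β hβR
      obtain ⟨qz, hqz⟩ := hq α hα
      obtain ⟨cz, hcz⟩ := hcoef i α hα
      refine ⟨(ℓ : ℤ) * qz * cz + z2, ?_⟩
      have e1 : ⟪(w i) lam, α⟫ = ⟪lam, β⟫ := winner (w i) lam α
      rw [real_inner_smul_right, inner_add_left, real_inner_smul_left, e1, hcz]
      rw [real_inner_smul_right, hββ] at hz2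
      rw [hqz] at hz2 ⊢
      push_cast
      push_cast at hz2
      linear_combination hz2
    · -- dominance
      intro j
      have hΔjF : Δ j ∈ insert (-θ) (Set.range Δ) := Set.mem_insert_of_mem _ ⟨j, rfl⟩
      have hmem := hFbwd i hi (Δ j) hΔjF
      have e1 : ⟪(w i) lam, Δ j⟫ = ⟪lam, (w i).symm (Δ j)⟫ := winner _ _ _
      rw [inner_add_left, real_inner_smul_left, hϖ, e1]
      rcases hmem with hm | ⟨k, hk⟩
      · have hji : Δ j = Δ i := by
          rw [show Δ j = (w i) ((w i).symm (Δ j)) from ((w i).apply_symm_apply _).symm,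
            hm, hwθ i hi]
        have hjeq : j = i := hΔinj hji
        rw [hm, hjeq, if_pos rfl, inner_neg_right]
        linarith [hlev]
      · rw [← hk]
        have h1 := hdom k
        have h2 : (0 : ℝ) ≤ (ℓ : ℝ) * (if i = j then 1 else 0) := by
          split_ifs <;> simp
        linarith
    · -- level
      rw [inner_add_left, real_inner_smul_left, hϖθ i, hi]
      have e1 : ⟪(w i) lam, θ⟫ = ⟪lam, (w i).symm θ⟫ := winner _ _ _
      have hmem := hFbwd i hi (-θ) (Set.mem_insert _ _)
      rcases hmem with hm | ⟨k, hk⟩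
      · exfalso
        have h1 : -θ = Δ i := by
          rw [show -θ = (w i) ((w i).symm (-θ)) from ((w i).apply_symm_apply _).symm,
            hm, hwθ i hi]
        exact hnotθ ⟨i, h1.symm⟩
      · have hsymmθ : (w i).symm θ = -Δ k := by
          have h1 : (w i).symm (-θ) = Δ k := hk.symm
          rw [map_neg] at h1
          exact neg_eq_iff_eq_neg.mp h1
        rw [e1, hsymmθ, inner_neg_right]
        have h2 := hdom k
        push_cast
        linarith
  refine ⟨part1, ?_⟩
  intro i j hi hj
  constructor
  · -- A_i ∘ A_j = id when w_i w_j = 1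
    intro hij lam _
    have hsymmj : ∀ x, (w i).symm x = w j x := by
      intro x
      apply (w i).injective
      rw [(w i).apply_symm_apply, ← hwmulapply, hij]
      simp
    have hji2 : w j * w i = 1 := by
      rw [mul_eq_one_iff_eq_inv.mp hij]
      group
    have hvec : ϖ i + (w i) (ϖ j) = 0 := by
      apply eqΔ
      intro k
      rw [inner_add_left, winner (w i) (ϖ j) (Δ k), hsymmj, inner_zero_left, hϖ]
      have hFk := hFfwd j hj (Δ k) (Set.mem_insert_of_mem _ ⟨k, rfl⟩)
      rcases hFk with hm | ⟨p, hp⟩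
      · have hki : k = i := by
          apply hΔinj
          have h1 : (w i) ((w j) (Δ k)) = Δ k := by
            rw [← hwmulapply, hij]; simp
          rw [hm, hwθ i hi] at h1
          exact h1.symm
        rw [hm, inner_neg_right, hϖθ j, hj, hki, if_pos rfl]
        push_cast; ring
      · have hpj : p ≠ j := by
          intro hpj
          have h1 : (w j) (Δ k) = (w j) (-θ) := by
            rw [← hp, hpj, ← hwθ j hj]
          exact hnotθ ⟨k, (w j).injective h1⟩
        have hki : k ≠ i := by
          intro hki
          have h2 : (w j) (Δ k) = -θ := by
            rw [hki, ← hwθ i hi, ← hwmulapply, hji2]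
            simp
          exact hnotθ ⟨p, hp.trans h2⟩
        rw [← hp, hϖ, if_neg (fun h => hki h.symm), if_neg (fun h => hpj h.symm)]
        norm_num
    rw [map_add, map_smul, ← hwmulapply (w i) (w j) lam, hij]
    have hone : (1 : V ≃ₗᵢ[ℝ] V) lam = lam := by simp
    rw [hone, ← add_assoc, ← smul_add, hvec, smul_zero, zero_add]
  · -- A_i ∘ A_j = A_k when w_i w_j = w_k
    intro k hk hijk lam _
    have hwiΔj : (w i) (Δ j) = Δ k := by
      rw [← hwθ j hj, ← hwmulapply, hijk, hwθ k hk]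
    have hvec : ϖ i + (w i) (ϖ j) = ϖ k := by
      apply eqΔ
      intro l
      rw [inner_add_left, winner (w i) (ϖ j) (Δ l), hϖ, hϖ]
      have hFl := hFbwd i hi (Δ l) (Set.mem_insert_of_mem _ ⟨l, rfl⟩)
      rcases hFl with hm | ⟨p, hp⟩
      · have hli : l = i := by
          apply hΔinj
          rw [show Δ l = (w i) ((w i).symm (Δ l)) from ((w i).apply_symm_apply _).symm,
            hm, hwθ i hi]
        have hki2 : k ≠ i := by
          intro hki
          have hwj1 : w j = 1 := by
            have h4 : w i * w j = w i * 1 := by rw [mul_one, hijk, hki]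
            exact mul_left_cancel h4
          have h2 : Δ j = -θ := by
            rw [← hwθ j hj, hwj1]; simp
          exact hnotθ ⟨j, h2⟩
        rw [hm, inner_neg_right, hϖθ j, hj, hli, if_pos rfl, if_neg hki2]
        push_cast; ring
      · have hlp : Δ l = (w i) (Δ p) := by
          rw [hp]
          exact ((w i).apply_symm_apply _).symm
        have hlii : l ≠ i := by
          intro h
          have h2 : (w i) (Δ p) = (w i) (-θ) := by
            rw [← hlp, h, ← hwθ i hi]
          exact hnotθ ⟨p, (w i).injective h2⟩
        by_cases hpj : p = j
        · have hlk : l = k := hΔinj (by rw [hlp, hpj, hwiΔj])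
          have e1 : ¬(i = l) := fun h => hlii h.symm
          have e2 : (j : Fin n) = p := hpj.symm
          have e3 : (k : Fin n) = l := hlk.symm
          rw [← hp, hϖ, if_pos e2, if_neg e1, if_pos e3]
          norm_num
        · have hlk : l ≠ k := by
            intro h
            apply hpj
            have h2 : (w i) (Δ p) = (w i) (Δ j) := by
              rw [← hlp, h, ← hwiΔj]
            exact hΔinj ((w i).injective h2)
          have e1 : ¬(i = l) := fun h => hlii h.symm
          have e2 : ¬(j = p) := fun h => hpj h.symm
          have e3 : ¬(k = l) := fun h => hlk h.symm
          rw [← hp, hϖ, if_neg e2, if_neg e1, if_neg e3]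
          norm_num
    rw [map_add, map_smul, ← hwmulapply (w i) (w j) lam, hijk, ← add_assoc, ← smul_add, hvec]
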